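/- Let V be a vector space over ℚ and let P₋, P₊, C₋, C₊ : V → V be linear endomorphisms satisfying P₋∘C₊ − C₊∘P₋ = id_V and C₋∘P₊ − P₊∘C₋ = id_V, all other pairs among these four operators commuting. Let W = ker P₋ ∩ ker C₋, and assume the natural map W ⊗ ℚ[x,y] → V sending w ⊗ x^a y^b to P₊^a(C₊^b(w)) is a linear isomorphism (equivalently, V is the internal direct sum of the subspaces P₊^aC₊^b(W) over a,b ≥ 0, and each P₊^aC₊^b restricts to an injection on W). Then: (i) ker P₋ is the internal direct sum ⊕_{a≥0} P₊^a(W); (ii) the operator φ := P₊∘C₋ preserves ker P₋ and acts on the summand P₊^a(W) as multiplication by the scalar a; consequently ker P₋ is the direct sum of eigenspaces of φ with non-negative integer eigenvalues. -/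

import Mathlib

/-!
Write `V ≅ W ⊗ ℚ[x, y]` with `x = Pp`, `y = Cp`. Since `[Pm, Cp] = 1`, `[Pm, Pp] = 0` and
`Pm W = 0`, the operator `Pm` acts as `∂/∂y`: it kills `x^a W` and maps `x^a y^(b+1) W`
injectively into `x^a y^b W`, so `ker Pm = ⊕ₐ x^a W`. Since `[Cm, Pp] = 1` and `Cm W = 0`,
`φ = Pp Cm` acts as the Euler operator `x ∂/∂x`, i.e. by `a` on `x^a W`.
-/

section CanonicalCommutation

variable {R : Type*} [Ring R] {a b : R}

theorem mul_mul_pow_of_mul_sub_mul_eq_one (h : a * b - b * a = 1) (n : ℕ) :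
    b * a * b ^ n = b ^ n * (b * a) + n • b ^ n := by
  have hab : a * b = b * a + 1 := sub_eq_iff_eq_add'.mp h
  induction n with
  | zero => simp
  | succ n ih =>
    calc b * a * b ^ (n + 1) = b ^ n * (b * a) * b + n • b ^ (n + 1) := by
          rw [pow_succ, ← mul_assoc, ih, add_mul, smul_mul_assoc]
      _ = b ^ (n + 1) * (b * a) + (n + 1) • b ^ (n + 1) := by
          rw [mul_assoc, mul_assoc, hab, ← mul_assoc, ← pow_succ, mul_add, mul_one, succ_nsmul]
          abel

theorem mul_pow_succ_of_mul_sub_mul_eq_one (h : a * b - b * a = 1) (n : ℕ) :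
    a * b ^ (n + 1) = b ^ (n + 1) * a + (n + 1) • b ^ n := by
  calc a * b ^ (n + 1) = (b * a + 1) * b ^ n := by
        rw [pow_succ', ← mul_assoc, ← sub_eq_iff_eq_add'.mp h]
    _ = b ^ (n + 1) * a + (n + 1) • b ^ n := by
        rw [add_mul, one_mul, mul_mul_pow_of_mul_sub_mul_eq_one h, ← mul_assoc, ← pow_succ,
          succ_nsmul, add_assoc]

end CanonicalCommutation

namespace Submodule

variable {ι R M N : Type*} [Ring R] [AddCommGroup M] [Module R M] [AddCommGroup N] [Module R N]

theorem disjoint_iSup_ker_of_iSupIndep_map {q : ι → Submodule R M} (f : M →ₗ[R] N)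
    (hq : ∀ i, Disjoint (q i) (LinearMap.ker f)) (hind : iSupIndep fun i ↦ (q i).map f) :
    Disjoint (⨆ i, q i) (LinearMap.ker f) := by
  rw [disjoint_def]
  intro x hx hfx
  obtain ⟨c, hc, rfl⟩ := (mem_iSup_iff_exists_finsupp q x).mp hx
  have hfc : ∀ i ∈ c.support, f (c i) = 0 :=
    (iSupIndep_iff_finsetSum_eq_zero_imp_eq_zero _).mp hind c.support (fun i ↦ f (c i))
      (fun i _ ↦ mem_map_of_mem (hc i)) (by rwa [← map_sum])
  exact Finset.sum_eq_zero fun i hi ↦ (disjoint_def.mp (hq i)) _ (hc i) (hfc i hi)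

theorem ker_eq_iSup_of_iSupIndep {p : ι × ℕ → Submodule R M} (hind : iSupIndep p)
    (hspan : ⨆ j, p j = ⊤) (f : Module.End R M) (hker : ∀ i, p (i, 0) ≤ LinearMap.ker f)
    (hmaps : ∀ i n, (p (i, n + 1)).map f ≤ p (i, n))
    (hinj : ∀ i n, Disjoint (p (i, n + 1)) (LinearMap.ker f)) :
    LinearMap.ker f = ⨆ i, p (i, 0) := by
  have hsplit : (⨆ i, p (i, 0)) ⊔ ⨆ j : ι × ℕ, p (j.1, j.2 + 1) = ⊤ := by
    simp_rw [← hspan, iSup_prod (f := p), ← sup_iSup_nat_succ fun n ↦ p (_, n), iSup_sup_eq]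
    rw [iSup_prod]
  have hdisj : Disjoint (⨆ j : ι × ℕ, p (j.1, j.2 + 1)) (LinearMap.ker f) :=
    disjoint_iSup_ker_of_iSupIndep_map f (fun j ↦ hinj j.1 j.2)
      (hind.mono fun j ↦ hmaps j.1 j.2)
  refine le_antisymm (fun x hx ↦ ?_) (iSup_le hker)
  obtain ⟨y, hy, z, hz, rfl⟩ := mem_sup.mp (hsplit ▸ mem_top : x ∈ _ ⊔ _)
  have hfz : z ∈ LinearMap.ker f := by
    rw [LinearMap.mem_ker, ← add_sub_cancel_left y z, map_sub, LinearMap.mem_ker.mp hx,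
      LinearMap.mem_ker.mp (iSup_le hker hy), sub_zero]
  rwa [disjoint_def.mp hdisj z hz hfz, add_zero]

end Submodule

namespace Module.End

variable {R M : Type*} [Semiring R] [AddCommGroup M] [Module R M]
  {Pm Pp Cm Cp : Module.End R M}

theorem apply_pow_mul_pow_succ (h1 : Pm * Cp - Cp * Pm = 1) (hPmPp : Pm * Pp = Pp * Pm)
    {w : M} (hw : Pm w = 0) (a b : ℕ) :
    Pm ((Pp ^ a * Cp ^ (b + 1)) w) = (b + 1) • (Pp ^ a * Cp ^ b) w := by
  have hcomm :
      Pm * (Pp ^ a * Cp ^ (b + 1)) = Pp ^ a * (Cp ^ (b + 1) * Pm + (b + 1) • Cp ^ b) := by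
    rw [← mul_assoc, (Commute.pow_right hPmPp a).eq, mul_assoc,
      mul_pow_succ_of_mul_sub_mul_eq_one h1]
  rw [← mul_apply, hcomm]
  simp [hw, succ_nsmul]

theorem map_pow_le_ker (hPmPp : Pm * Pp = Pp * Pm) {W : Submodule R M}
    (hW : W ≤ LinearMap.ker Pm) (a : ℕ) : W.map (Pp ^ a) ≤ LinearMap.ker Pm := by
  rintro _ ⟨w, hw, rfl⟩
  rw [LinearMap.mem_ker, ← mul_apply, (Commute.pow_right hPmPp a).eq, mul_apply, hW hw,
    map_zero]

theorem map_map_pow_mul_pow_succ_le (h1 : Pm * Cp - Cp * Pm = 1) (hPmPp : Pm * Pp = Pp * Pm)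
    {W : Submodule R M} (hW : W ≤ LinearMap.ker Pm) (a b : ℕ) :
    (W.map (Pp ^ a * Cp ^ (b + 1))).map Pm ≤ W.map (Pp ^ a * Cp ^ b) := by
  rintro _ ⟨_, ⟨w, hw, rfl⟩, rfl⟩
  rw [apply_pow_mul_pow_succ h1 hPmPp (hW hw)]
  exact nsmul_mem (Submodule.mem_map_of_mem hw) _

theorem disjoint_map_pow_mul_pow_succ_ker [IsAddTorsionFree M] (h1 : Pm * Cp - Cp * Pm = 1)
    (hPmPp : Pm * Pp = Pp * Pm) {W : Submodule R M} (hW : W ≤ LinearMap.ker Pm) (a b : ℕ)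
    (hinj : ∀ w ∈ W, (Pp ^ a * Cp ^ b) w = 0 → w = 0) :
    Disjoint (W.map (Pp ^ a * Cp ^ (b + 1))) (LinearMap.ker Pm) := by
  rw [Submodule.disjoint_def]
  rintro _ ⟨w, hw, rfl⟩ hker
  rw [LinearMap.mem_ker, apply_pow_mul_pow_succ h1 hPmPp (hW hw)] at hker
  rw [hinj w hw ((smul_eq_zero.mp hker).resolve_left b.succ_ne_zero), map_zero]

theorem mul_apply_pow_apply (h2 : Cm * Pp - Pp * Cm = 1) {w : M} (hw : Cm w = 0) (a : ℕ) :
    (Pp * Cm) ((Pp ^ a) w) = a • (Pp ^ a) w := by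
  rw [← mul_apply, mul_mul_pow_of_mul_sub_mul_eq_one h2]
  simp [hw]

end Module.End

theorem stmt_2_general {V : Type*} [AddCommGroup V] [Module ℚ V]
    (Pm Pp Cm Cp : Module.End ℚ V)
    (h1 : Pm * Cp - Cp * Pm = 1)
    (h2 : Cm * Pp - Pp * Cm = 1)
    (hPmPp : Pm * Pp = Pp * Pm)
    (hPmCm : Pm * Cm = Cm * Pm)
    (W : Submodule ℚ V) (hWdef : W = LinearMap.ker Pm ⊓ LinearMap.ker Cm)
    (hinternal : DirectSum.IsInternal
      (fun ab : ℕ × ℕ => Submodule.map (Pp ^ ab.1 * Cp ^ ab.2) W))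
    (hinj : ∀ (a b : ℕ) (w : V), w ∈ W → (Pp ^ a * Cp ^ b) w = 0 → w = 0) :
    (iSupIndep (fun a : ℕ => Submodule.map (Pp ^ a) W) ∧
      (⨆ a : ℕ, Submodule.map (Pp ^ a) W) = LinearMap.ker Pm) ∧
    (∀ x ∈ LinearMap.ker Pm, (Pp * Cm) x ∈ LinearMap.ker Pm) ∧
    (∀ (a : ℕ), ∀ x ∈ Submodule.map (Pp ^ a) W, (Pp * Cm) x = (a : ℚ) • x) := by
  have := IsAddTorsionFree.of_module_rat (M := V)
  have hWPm : W ≤ LinearMap.ker Pm := hWdef ▸ inf_le_left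
  have hWCm : W ≤ LinearMap.ker Cm := hWdef ▸ inf_le_right
  have hpiece : ∀ a : ℕ, W.map (Pp ^ a * Cp ^ 0) = W.map (Pp ^ a) := by simp
  have hind := hinternal.submodule_iSupIndep
  refine ⟨⟨?_, ?_⟩, fun x hx ↦ ?_, ?_⟩
  · simpa only [Function.comp_def, hpiece] using
      hind.comp (f := fun a : ℕ ↦ (a, 0)) fun a a' h ↦ congrArg Prod.fst h
  · have hker := Submodule.ker_eq_iSup_of_iSupIndep hind hinternal.submodule_iSup_eq_top Pm
      (fun a ↦ hpiece a ▸ Module.End.map_pow_le_ker hPmPp hWPm a)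
      (Module.End.map_map_pow_mul_pow_succ_le h1 hPmPp hWPm)
      fun a b ↦ Module.End.disjoint_map_pow_mul_pow_succ_ker h1 hPmPp hWPm a b (hinj a b)
    simpa only [hpiece] using hker.symm
  · rw [LinearMap.mem_ker, ← Module.End.mul_apply, (Commute.mul_right hPmPp hPmCm).eq,
      Module.End.mul_apply, hx, map_zero]
  · rintro a _ ⟨w, hw, rfl⟩
    rw [Module.End.mul_apply_pow_apply h2 (hWCm hw), Nat.cast_smul_eq_nsmul]

/-- Abstract core of Proposition 2.6 ('etade'): with Rennemo-type operators on a `ℚ`-vector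
space `V`, if `V` is the internal direct sum of the subspaces `P₊^a C₊^b (W)` for
`W = ker P₋ ∩ ker C₋`, with each `P₊^a C₊^b` injective on `W`, then `ker P₋` is the internal
direct sum of the `P₊^a (W)`, and `φ = P₊ ∘ C₋` preserves `ker P₋` and acts on `P₊^a (W)` by
the scalar `a`. -/
theorem stmt_2 {V : Type*} [AddCommGroup V] [Module ℚ V]
    (Pm Pp Cm Cp : Module.End ℚ V)
    (h1 : Pm * Cp - Cp * Pm = 1)
    (h2 : Cm * Pp - Pp * Cm = 1)
    (hPmPp : Pm * Pp = Pp * Pm)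
    (hCmCp : Cm * Cp = Cp * Cm)
    (hPpCp : Pp * Cp = Cp * Pp)
    (hPmCm : Pm * Cm = Cm * Pm)
    (W : Submodule ℚ V) (hWdef : W = LinearMap.ker Pm ⊓ LinearMap.ker Cm)
    (hinternal : DirectSum.IsInternal
      (fun ab : ℕ × ℕ => Submodule.map (Pp ^ ab.1 * Cp ^ ab.2) W))
    (hinj : ∀ (a b : ℕ) (w : V), w ∈ W → (Pp ^ a * Cp ^ b) w = 0 → w = 0) :
    (iSupIndep (fun a : ℕ => Submodule.map (Pp ^ a) W) ∧
      (⨆ a : ℕ, Submodule.map (Pp ^ a) W) = LinearMap.ker Pm) ∧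
    (∀ x ∈ LinearMap.ker Pm, (Pp * Cm) x ∈ LinearMap.ker Pm) ∧
    (∀ (a : ℕ), ∀ x ∈ Submodule.map (Pp ^ a) W, (Pp * Cm) x = (a : ℚ) • x) :=
  stmt_2_general Pm Pp Cm Cp h1 h2 hPmPp hPmCm W hWdef hinternal hinj
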